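/- Let X be a CAT(0) space, and let x₀ and x be two distinct fixed points in X. For some ε > 0, let γ : [0,ε) → X be a geodesic with γ(0) = x and initial tangent vector v_x. If {x_i : i ≥ 1} is a sequence of points along γ converging to x, then the directional derivative D at x in the direction v_x of the distance function d_{x₀} = d(x₀, ·) satisfies Dd_{x₀}(v_x) = lim_{i→∞} Dd_{x₀}(v_{x_i}), where v_{x_i} denotes the tangent vector of γ at x_i. -/
import Mathlib


open Set Filter Topology

noncomputable section

/-- `γ` is (the affine parametrisation on `[0,1]` of) a geodesic segment from `p` to `q`
in the metric space `X`. -/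
def IsGeodesicSegment {X : Type*} [MetricSpace X] (p q : X) (γ : ℝ → X) : Prop :=
  γ 0 = p ∧ γ 1 = q ∧ ∀ s ∈ Icc (0 : ℝ) 1, ∀ t ∈ Icc (0 : ℝ) 1,
    dist (γ s) (γ t) = |s - t| * dist p q

/-- `X` is a CAT(0) space: it is geodesic, and every geodesic triangle satisfies the
(CN) comparison inequality, i.e. is at least as thin as its Euclidean comparison
triangle. -/
def CAT0 (X : Type*) [MetricSpace X] : Prop :=
  (∀ p q : X, ∃ γ : ℝ → X, IsGeodesicSegment p q γ) ∧
    ∀ p q r : X, ∀ γ : ℝ → X, IsGeodesicSegment q r γ → ∀ t ∈ Icc (0 : ℝ) 1,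
      dist p (γ t) ^ 2 ≤
        (1 - t) * dist p q ^ 2 + t * dist p r ^ 2 - t * (1 - t) * dist q r ^ 2

/-- In a CAT(0) space, for a geodesic `γ` issuing from `x = γ 0` with
(constant) speed `c > 0`, and for points `x_i = γ (s i)` along `γ` converging to `x`,
the directional derivative of the distance function `d(x₀, ·)` along `γ` at the points
`x_i` (i.e. the one-sided derivative of `t ↦ d(x₀, γ t)` at `s i`) converges to the
directional derivative at `x` (the one-sided derivative at `0`). -/
theorem statement_12 {X : Type*} [MetricSpace X] (hX : CAT0 X)
    (x₀ x : X) (hne : x₀ ≠ x) (ε c : ℝ) (hε : 0 < ε) (hc : 0 < c)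
    (γ : ℝ → X) (hγ0 : γ 0 = x)
    (hgeo : ∀ s ∈ Ico (0 : ℝ) ε, ∀ t ∈ Ico (0 : ℝ) ε, dist (γ s) (γ t) = c * |s - t|)
    (s : ℕ → ℝ) (hs : ∀ i, s i ∈ Ioo (0 : ℝ) ε)
    (hs0 : Tendsto s atTop (nhds 0))
    (D₀ : ℝ) (hD₀ : HasDerivWithinAt (fun t : ℝ => dist x₀ (γ t)) D₀ (Ici (0 : ℝ)) 0)
    (D : ℕ → ℝ)
    (hD : ∀ i, HasDerivWithinAt (fun t : ℝ => dist x₀ (γ t)) (D i) (Ici (s i)) (s i)) :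
    Tendsto D atTop (nhds D₀) := by
  set f : ℝ → ℝ := fun t => dist x₀ (γ t) with hfdef
  -- `f` is convex on `Ico 0 ε`, by the CN inequality.
  have hconv : ConvexOn ℝ (Ico (0 : ℝ) ε) f := by
    refine ⟨convex_Ico _ _, ?_⟩
    intro a ha b hb μ ν hμ hν hμν
    have hmem : ∀ u ∈ Icc (0 : ℝ) 1, a + u * (b - a) ∈ Ico (0 : ℝ) ε := by
      intro u hu
      refine ⟨by nlinarith [ha.1, hb.1, hu.1, hu.2], ?_⟩
      rcases lt_or_ge u 1 with h1 | h1
      · nlinarith [mul_nonneg hu.1 (sub_pos.2 hb.2).le,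
          mul_pos (sub_pos.2 h1) (sub_pos.2 ha.2)]
      · have hu1 : u = 1 := le_antisymm hu.2 h1
        subst hu1
        simpa using hb.2
    have hseg : IsGeodesicSegment (γ a) (γ b) (fun u => γ (a + u * (b - a))) := by
      refine ⟨by norm_num, by norm_num, ?_⟩
      intro u hu v hv
      have h1 := hgeo _ (hmem u hu) _ (hmem v hv)
      have h2 := hgeo a ha b hb
      simp only
      rw [h1, h2, show a + u * (b - a) - (a + v * (b - a)) = (u - v) * (b - a) by ring,
        abs_mul, abs_sub_comm b a]
      ring
    have hCN := hX.2 x₀ (γ a) (γ b) _ hseg ν ⟨hν, by linarith⟩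
    have hpt : a + ν * (b - a) = μ • a + ν • b := by
      have : μ = 1 - ν := by linarith
      simp [this]; ring
    rw [hpt] at hCN
    have habs : |f a - f b| ≤ dist (γ a) (γ b) := by
      simpa [hfdef, dist_comm] using abs_dist_sub_le (γ a) (γ b) x₀
    have h0 : (0 : ℝ) ≤ μ * f a + ν * f b := by
      have h0a : (0 : ℝ) ≤ f a := dist_nonneg
      have h0b : (0 : ℝ) ≤ f b := dist_nonneg
      positivity
    have hsq : f (μ • a + ν • b) ^ 2 ≤ (μ * f a + ν * f b) ^ 2 := by
      have hμν' : μ = 1 - ν := by linarith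
      have h1ν : (0 : ℝ) ≤ 1 - ν := by linarith
      have habs' := abs_le.1 habs
      have hC2 : (f a - f b) ^ 2 ≤ dist (γ a) (γ b) ^ 2 := sq_le_sq' habs'.1 habs'.2
      have hprod : 0 ≤ ν * (1 - ν) * (dist (γ a) (γ b) ^ 2 - (f a - f b) ^ 2) :=
        mul_nonneg (mul_nonneg hν h1ν) (by linarith)
      calc f (μ • a + ν • b) ^ 2
          ≤ (1 - ν) * f a ^ 2 + ν * f b ^ 2 - ν * (1 - ν) * dist (γ a) (γ b) ^ 2 := hCN
        _ ≤ ((1 - ν) * f a + ν * f b) ^ 2 := by nlinarith [hprod]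
        _ = (μ * f a + ν * f b) ^ 2 := by rw [hμν']
    have hfin := Real.sqrt_le_sqrt hsq
    rw [Real.sqrt_sq dist_nonneg, Real.sqrt_sq h0] at hfin
    simpa [smul_eq_mul] using hfin
  -- slopes converge to the one-sided derivatives
  have hslope0 : Tendsto (slope f 0) (𝓝[>] (0 : ℝ)) (𝓝 D₀) := by
    have := hasDerivWithinAt_iff_tendsto_slope.1 hD₀
    simpa [Ici_sdiff_left] using this
  have hslopei : ∀ i, Tendsto (slope f (s i)) (𝓝[>] (s i)) (𝓝 (D i)) := by
    intro i
    have := hasDerivWithinAt_iff_tendsto_slope.1 (hD i)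
    simpa [Ici_sdiff_left] using this
  have hmem0 : (0 : ℝ) ∈ Ico (0 : ℝ) ε := ⟨le_rfl, hε⟩
  have hmemsi : ∀ i, s i ∈ Ico (0 : ℝ) ε := fun i => ⟨(hs i).1.le, (hs i).2⟩
  -- lower bound : D₀ ≤ D i for all i
  have hlow : ∀ i, D₀ ≤ D i := by
    intro i
    have h1 : D₀ ≤ slope f 0 (s i) := by
      refine le_of_tendsto hslope0 ?_
      filter_upwards [Ioo_mem_nhdsGT (hs i).1] with u hu
      have := hconv.secant_mono hmem0 ⟨hu.1.le, hu.2.trans (hs i).2⟩ (hmemsi i)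
        hu.1.ne' (hs i).1.ne' hu.2.le
      simpa [slope_def_field] using this
    have h2 : slope f 0 (s i) ≤ D i := by
      refine ge_of_tendsto (hslopei i) ?_
      filter_upwards [Ioo_mem_nhdsGT (hs i).2] with u hu
      have := hconv.slope_mono_adjacent hmem0 ⟨((hs i).1.trans hu.1).le, hu.2⟩ (hs i).1 hu.1
      simpa [slope_def_field] using this
    linarith
  rw [tendsto_order]
  constructor
  · intro a ha
    filter_upwards with i using lt_of_lt_of_le ha (hlow i)
  · intro a ha
    -- pick t₀ ∈ (0, ε) with slope f 0 t₀ < a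
    obtain ⟨t₀, ht₀a, ht₀⟩ :
        ∃ t₀, slope f 0 t₀ < a ∧ t₀ ∈ Ioo (0 : ℝ) ε := by
      have h1 : ∀ᶠ t in 𝓝[>] (0 : ℝ), slope f 0 t < a := hslope0.eventually_lt_const ha
      have h2 : ∀ᶠ t in 𝓝[>] (0 : ℝ), t ∈ Ioo (0 : ℝ) ε := Ioo_mem_nhdsGT hε
      exact (h1.and h2).exists
    -- f (s i) → f 0
    have hfs : Tendsto (fun i => f (s i)) atTop (𝓝 (f 0)) := by
      rw [tendsto_iff_dist_tendsto_zero]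
      have hb : ∀ i, dist (f (s i)) (f 0) ≤ c * |s i| := by
        intro i
        have h1 : dist (f (s i)) (f 0) ≤ dist (γ (s i)) (γ 0) := by
          rw [Real.dist_eq]
          simpa [hfdef, dist_comm] using abs_dist_sub_le (γ (s i)) (γ 0) x₀
        have h2 := hgeo _ (hmemsi i) 0 hmem0
        simpa [h2] using h1
      have hlim : Tendsto (fun i => c * |s i|) atTop (𝓝 0) := by
        have := (hs0.abs).const_mul c
        simpa using this
      exact squeeze_zero (fun i => dist_nonneg) hb hlim
    -- slope f (s i) t₀ → slope f 0 t₀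
    have hslopetend : Tendsto (fun i => slope f (s i) t₀) atTop (𝓝 (slope f 0 t₀)) := by
      simp only [slope_def_field]
      have hnum : Tendsto (fun i => f t₀ - f (s i)) atTop (𝓝 (f t₀ - f 0)) :=
        tendsto_const_nhds.sub hfs
      have hden : Tendsto (fun i => t₀ - s i) atTop (𝓝 (t₀ - 0)) :=
        tendsto_const_nhds.sub hs0
      exact hnum.div hden (by simpa using ht₀.1.ne')
    have hev1 : ∀ᶠ i in atTop, slope f (s i) t₀ < a :=
      hslopetend.eventually_lt_const ht₀a
    have hev2 : ∀ᶠ i in atTop, s i < t₀ := hs0.eventually_lt_const ht₀.1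
    filter_upwards [hev1, hev2] with i h1 h2
    have hup : D i ≤ slope f (s i) t₀ := by
      refine le_of_tendsto (hslopei i) ?_
      filter_upwards [Ioo_mem_nhdsGT h2] with u hu
      have := hconv.secant_mono (hmemsi i) ⟨((hs i).1.trans hu.1).le, hu.2.trans ht₀.2⟩
        ⟨ht₀.1.le, ht₀.2⟩ hu.1.ne' h2.ne' hu.2.le
      simpa [slope_def_field] using this
    linarith
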